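/- arXiv:2605.20151 — 2 statements merged into one kernel-verified Lean document; each statement's English description precedes it below -/
import Mathlib

section
/- Suppose T₀ ≥ 1 is an integer such that every μ ∈ M_l^nc is reachable in G from some node of M_u by a directed path of length at most T₀. Then for every μ ∈ M_l^nc, every integer t ≥ 0, and every integer t₀ ≥ T₀: ∑_{ν∈M_u} J_{t+t₀,t+1,μ,ν} ≥ α^{T₀}; equivalently, ∑_{ν∈M_l} J_{t+t₀,t+1,μ,ν} ≤ 1 − α^{T₀}. -/
open Matrix Finset Filter

noncomputable section

/-- In-neighbourhood of `μ` in the directed graph with edge set `E`. -/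
def Nin {K : ℕ} (E : Finset (Fin K × Fin K)) (μ : Fin K) : Finset (Fin K) :=
  Finset.univ.filter (fun ν => (ν, μ) ∈ E)

/-- The set of learning models (those with at least one incoming edge). -/
def Ml {K : ℕ} (E : Finset (Fin K × Fin K)) : Finset (Fin K) :=
  Finset.univ.filter (fun μ => Nin E μ ≠ ∅)

/-- The set of models with no incoming edge (stable data sources). -/
def Mu {K : ℕ} (E : Finset (Fin K × Fin K)) : Finset (Fin K) :=
  Finset.univ.filter (fun μ => Nin E μ = ∅)

/-- The edge relation: `EdgeRel E a b` iff `(a, b) ∈ E`. -/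
def EdgeRel {K : ℕ} (E : Finset (Fin K × Fin K)) : Fin K → Fin K → Prop :=
  fun a b => (a, b) ∈ E

open Classical in
/-- Models in `M_l` not reachable by a directed path from any node of `M_u`. -/
def MlInf {K : ℕ} (E : Finset (Fin K × Fin K)) : Finset (Fin K) :=
  (Ml E).filter (fun μ => ∀ ν ∈ Mu E, ¬ Relation.TransGen (EdgeRel E) ν μ)

open Classical in
/-- Models in `M_l^∞` together with models reachable from some node of `M_l^∞`. -/
def Mlc {K : ℕ} (E : Finset (Fin K × Fin K)) : Finset (Fin K) :=
  (Ml E).filter (fun μ => μ ∈ MlInf E ∨ ∃ ν ∈ MlInf E, Relation.TransGen (EdgeRel E) ν μ)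

/-- The non-collapsing learning models. -/
def Mlnc {K : ℕ} (E : Finset (Fin K × Fin K)) : Finset (Fin K) := Ml E \ Mlc E

/-- `Jmat P t s = P_t P_{t−1} ⋯ P_s` (equal to `I` when `s = t + 1`). -/
def Jmat {K : ℕ} (P : ℕ → Matrix (Fin K) (Fin K) ℝ) (t s : ℕ) : Matrix (Fin K) (Fin K) ℝ :=
  ((List.range' s (t + 1 - s)).reverse.map P).prod

/-- The `E`-paths `v_1 → ⋯ → v_x → μ` of length `x` ending at `μ`, encoded as a function
`v : Fin (x+1) → Fin K` with `v x = μ` and `(v i, v (i+1)) ∈ E` for all `i < x`. -/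
def pathsTo {K : ℕ} (E : Finset (Fin K × Fin K)) (x : ℕ) (μ : Fin K) :
    Finset (Fin (x + 1) → Fin K) :=
  Finset.univ.filter (fun v => v (Fin.last x) = μ ∧ ∀ i : Fin x, (v i.castSucc, v i.succ) ∈ E)

end

lemma Jmat_self {K : ℕ} (P : ℕ → Matrix (Fin K) (Fin K) ℝ) (t : ℕ) :
    Jmat P t (t + 1) = 1 := by
  simp [Jmat]

lemma Jmat_succ {K : ℕ} (P : ℕ → Matrix (Fin K) (Fin K) ℝ) (t n : ℕ) :
    Jmat P (t + n + 1) (t + 1) = P (t + n + 1) * Jmat P (t + n) (t + 1) := by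
  have h1 : t + n + 1 + 1 - (t + 1) = n + 1 := by omega
  have h2 : t + n + 1 - (t + 1) = n := by omega
  rw [Jmat, Jmat, h1, h2, List.range'_concat]
  have h3 : t + 1 + n = t + n + 1 := by omega
  simp [List.prod_append, h3]

lemma Jmat_nonneg {K : ℕ} (P : ℕ → Matrix (Fin K) (Fin K) ℝ)
    (hPnn : ∀ s, 1 ≤ s → ∀ i j : Fin K, 0 ≤ P s i j) (t : ℕ) :
    ∀ n, ∀ i j : Fin K, 0 ≤ Jmat P (t + n) (t + 1) i j := by
  intro n
  induction n with
  | zero =>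
    intro i j
    rw [Jmat_self, Matrix.one_apply]
    split <;> norm_num
  | succ n ih =>
    intro i j
    show 0 ≤ Jmat P (t + n + 1) (t + 1) i j
    rw [Jmat_succ, Matrix.mul_apply]
    exact Finset.sum_nonneg fun k _ => mul_nonneg (hPnn _ (by omega) _ _) (ih _ _)

lemma Jmat_rowsum {K : ℕ} (P : ℕ → Matrix (Fin K) (Fin K) ℝ)
    (hProw : ∀ s, 1 ≤ s → ∀ i : Fin K, ∑ j, P s i j = 1) (t : ℕ) :
    ∀ n, ∀ i : Fin K, ∑ j, Jmat P (t + n) (t + 1) i j = 1 := by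
  intro n
  induction n with
  | zero =>
    intro i
    rw [Jmat_self]
    simp [Matrix.one_apply]
  | succ n ih =>
    intro i
    show ∑ j, Jmat P (t + n + 1) (t + 1) i j = 1
    rw [Jmat_succ]
    simp only [Matrix.mul_apply]
    rw [Finset.sum_comm]
    simp only [← Finset.mul_sum]
    simp only [ih, mul_one]
    exact hProw _ (by omega) i

lemma Jmat_path_bound {K : ℕ} (P : ℕ → Matrix (Fin K) (Fin K) ℝ)
    (hPnn : ∀ s, 1 ≤ s → ∀ i j : Fin K, 0 ≤ P s i j) (t : ℕ)
    (w : ℕ → Fin K) (b : ℕ → ℝ) (hb : ∀ j, 0 ≤ b j) :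
    ∀ n, (∀ j, j < n → b j ≤ P (t + j + 1) (w (j + 1)) (w j)) →
      (∏ j ∈ Finset.range n, b j) ≤ Jmat P (t + n) (t + 1) (w n) (w 0) := by
  intro n
  induction n with
  | zero =>
    intro _
    simp [Jmat_self, Matrix.one_apply]
  | succ n ih =>
    intro hstep
    show _ ≤ Jmat P (t + n + 1) (t + 1) (w (n + 1)) (w 0)
    rw [Jmat_succ, Matrix.mul_apply, Finset.prod_range_succ]
    have h1 : (∏ j ∈ Finset.range n, b j) ≤ Jmat P (t + n) (t + 1) (w n) (w 0) :=
      ih (fun j hj => hstep j (by omega))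
    have hterm : P (t + n + 1) (w (n + 1)) (w n) * Jmat P (t + n) (t + 1) (w n) (w 0) ≤
        ∑ k, P (t + n + 1) (w (n + 1)) k * Jmat P (t + n) (t + 1) k (w 0) :=
      Finset.single_le_sum
        (f := fun k => P (t + n + 1) (w (n + 1)) k * Jmat P (t + n) (t + 1) k (w 0))
        (fun k _ => mul_nonneg (hPnn _ (by omega) _ _) (Jmat_nonneg P hPnn t n _ _))
        (Finset.mem_univ _)
    refine le_trans ?_ hterm
    rw [mul_comm]
    exact mul_le_mul (hstep n (by omega)) h1
      (Finset.prod_nonneg fun j _ => hb j) (hPnn _ (by omega) _ _)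

/-- If every `μ ∈ M_l^nc` is reachable in `G` from some node of `M_u` by a
directed path of length at most `T₀` (with `T₀ ≥ 1`), then for every `μ ∈ M_l^nc`, every
`t ≥ 0` and every `t₀ ≥ T₀`: `∑_{ν∈M_u} J_{t+t₀,t+1,μ,ν} ≥ α^{T₀}`; equivalently
`∑_{ν∈M_l} J_{t+t₀,t+1,μ,ν} ≤ 1 − α^{T₀}`. -/
theorem stmt13
    {K : ℕ} (hK : 1 ≤ K)
    (E : Finset (Fin K × Fin K))
    (α : ℝ) (hα0 : 0 < α) (hα1 : α < 1)
    (P : ℕ → Matrix (Fin K) (Fin K) ℝ)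
    (hPzero : ∀ t, 1 ≤ t → ∀ μ ν : Fin K,
      ¬ ((μ ∈ Ml E ∧ ν ∈ Nin E μ) ∨ (μ = ν ∧ μ ∈ Mu E)) → P t μ ν = 0)
    (hPnn : ∀ t, 1 ≤ t → ∀ μ ν : Fin K, 0 ≤ P t μ ν)
    (hPu : ∀ t, 1 ≤ t → ∀ μ ∈ Mu E, P t μ μ = 1)
    (hProw : ∀ t, 1 ≤ t → ∀ μ ∈ Ml E, ∑ ν ∈ Nin E μ, P t μ ν = 1)
    (hPα : ∀ t, 1 ≤ t → ∀ ν μ : Fin K, (ν, μ) ∈ E → α ≤ P t μ ν)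
    (T₀ : ℕ) (hT₀ : 1 ≤ T₀)
    (hreach : ∀ μ ∈ Mlnc E, ∃ x : ℕ, 1 ≤ x ∧ x ≤ T₀ ∧
      ∃ v ∈ pathsTo E x μ, v 0 ∈ Mu E) :
    ∀ μ ∈ Mlnc E, ∀ t t₀ : ℕ, T₀ ≤ t₀ →
      α ^ T₀ ≤ ∑ ν ∈ Mu E, Jmat P (t + t₀) (t + 1) μ ν ∧
      ∑ ν ∈ Ml E, Jmat P (t + t₀) (t + 1) μ ν ≤ 1 - α ^ T₀ := by
  -- full row sums of each `P s` are 1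
  have hProwFull : ∀ s, 1 ≤ s → ∀ i : Fin K, ∑ j, P s i j = 1 := by
    intro s hs i
    by_cases h : Nin E i = ∅
    · have hiMu : i ∈ Mu E := by simp [Mu, h]
      have hiMl : i ∉ Ml E := by simp [Ml, h]
      rw [Finset.sum_eq_single i]
      · exact hPu s hs i hiMu
      · intro j _ hj
        apply hPzero s hs i j
        rintro (⟨h1, _⟩ | ⟨h1, _⟩)
        · exact hiMl h1
        · exact hj h1.symm
      · intro hi; exact absurd (Finset.mem_univ i) hi
    · have hiMl : i ∈ Ml E := by simp [Ml, h]
      have hiMu : i ∉ Mu E := by simp [Mu, h]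
      rw [← hProw s hs i hiMl]
      symm
      apply Finset.sum_subset (Finset.subset_univ _)
      intro j _ hj
      apply hPzero s hs i j
      rintro (⟨_, h2⟩ | ⟨_, h2⟩)
      · exact hj h2
      · exact hiMu h2
  intro μ hμ t t₀ ht₀
  obtain ⟨x, hx1, hxT, v, hv, hv0⟩ := hreach μ hμ
  rw [pathsTo, Finset.mem_filter] at hv
  obtain ⟨-, hlast, hedge⟩ := hv
  set m : ℕ := t₀ - x with hm
  have hxt₀ : x ≤ t₀ := le_trans hxT ht₀
  have hmx : m + x = t₀ := by omega
  -- the padded walk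
  set w : ℕ → Fin K := fun j => v ⟨min (j - m) x, Nat.lt_succ_of_le (min_le_right _ _)⟩ with hw
  set b : ℕ → ℝ := fun j => if j < m then 1 else α with hbdef
  have hb : ∀ j, 0 ≤ b j := by
    intro j; simp only [hbdef]; split
    · norm_num
    · exact hα0.le
  have hstep : ∀ j, j < t₀ → b j ≤ P (t + j + 1) (w (j + 1)) (w j) := by
    intro j hj
    by_cases hjm : j < m
    · have e1 : w j = v 0 := by
        simp only [hw]; congr 1; apply Fin.ext; simp; omega
      have e2 : w (j + 1) = v 0 := by
        simp only [hw]; congr 1; apply Fin.ext; simp; omega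
      rw [e1, e2]
      have := hPu (t + j + 1) (by omega) (v 0) hv0
      simp only [hbdef, if_pos hjm]
      rw [this]
    · have hjx : j - m < x := by omega
      set i : Fin x := ⟨j - m, hjx⟩ with hi
      have e1 : w j = v i.castSucc := by
        simp only [hw]; congr 1; apply Fin.ext; simp [Fin.castSucc, i]; omega
      have e2 : w (j + 1) = v i.succ := by
        simp only [hw]; congr 1; apply Fin.ext; simp [Fin.succ, i]; omega
      rw [e1, e2]
      simp only [hbdef, if_neg hjm]
      exact hPα (t + j + 1) (by omega) _ _ (hedge i)
  have hpath := Jmat_path_bound P hPnn t w b hb t₀ hstep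
  have hw0 : w 0 = v 0 := by
    simp only [hw]; congr 1; apply Fin.ext; simp
  have hwt₀ : w t₀ = μ := by
    have : (⟨min (t₀ - m) x, Nat.lt_succ_of_le (min_le_right _ _)⟩ : Fin (x + 1)) = Fin.last x := by
      apply Fin.ext; simp [Fin.last]; omega
    simp only [hw, this, hlast]
  rw [hw0, hwt₀] at hpath
  -- the product equals α ^ x
  have hprod : (∏ j ∈ Finset.range t₀, b j) = α ^ x := by
    rw [← hmx, Finset.prod_range_add]
    have e1 : (∏ j ∈ Finset.range m, b j) = 1 :=
      Finset.prod_eq_one fun j hj => by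
        simp only [hbdef, if_pos (Finset.mem_range.mp hj)]
    have e2 : (∏ j ∈ Finset.range x, b (m + j)) = α ^ x := by
      have he : ∀ j ∈ Finset.range x, b (m + j) = α := by
        intro j _
        simp only [hbdef]
        rw [if_neg (by omega)]
      rw [Finset.prod_congr rfl he, Finset.prod_const, Finset.card_range]
    rw [e1, e2, one_mul]
  rw [hprod] at hpath
  -- key inequality
  have hkey : α ^ T₀ ≤ ∑ ν ∈ Mu E, Jmat P (t + t₀) (t + 1) μ ν := by
    have h1 : α ^ T₀ ≤ α ^ x := pow_le_pow_of_le_one hα0.le hα1.le hxT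
    have h2 : Jmat P (t + t₀) (t + 1) μ (v 0) ≤ ∑ ν ∈ Mu E, Jmat P (t + t₀) (t + 1) μ ν :=
      Finset.single_le_sum (fun k _ => Jmat_nonneg P hPnn t t₀ μ k) hv0
    linarith
  refine ⟨hkey, ?_⟩
  have hU : Mu E ∪ Ml E = Finset.univ := by
    ext ν; simp only [Mu, Ml, Finset.mem_union, Finset.mem_filter, Finset.mem_univ, true_and]
    tauto
  have hD : Disjoint (Mu E) (Ml E) := by
    rw [Finset.disjoint_left]
    intro a ha hb'
    simp only [Mu, Ml, Finset.mem_filter, Finset.mem_univ, true_and] at ha hb'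
    exact hb' ha
  have htot : ∑ ν ∈ Mu E, Jmat P (t + t₀) (t + 1) μ ν +
      ∑ ν ∈ Ml E, Jmat P (t + t₀) (t + 1) μ ν = 1 := by
    rw [← Finset.sum_union hD, hU]
    exact Jmat_rowsum P hProwFull t t₀ μ
  linarith
end

section
/- Let d ≥ 1 be an integer, η ≥ 0, and for each integer t ≥ 1 and each edge (ν, μ) ∈ E let M_{t,μ,ν} be a real d×d matrix with ‖M_{t,μ,ν} − P_{t,μ,ν} I_d‖_op ≤ η. Then for every node μ ∈ M_l ∖ M_l^∞ and all integers t ≥ x ≥ 1, the sum over all E-paths v_1 → v_2 → ⋯ → v_x → μ of length x with v_1, …, v_x ∉ M_l^∞ of the products ‖M_{t,μ,v_x}‖_op · ‖M_{t−1,v_x,v_{x−1}}‖_op ⋯ ‖M_{t−x+1,v_2,v_1}‖_op is at most (1 + η/α)^K · ((1 + η/α)^K − α^K)^{⌊x/K⌋}; in particular, the operator norm of the matrix ∑ M_{t,μ,v_x} M_{t−1,v_x,v_{x−1}} ⋯ M_{t−x+1,v_2,v_1}, summed over the same set of paths, is at most this bound. Moreover, for μ ∈ M_l^∞ no such path exists,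 so the corresponding matrix sum is the zero matrix. -/
/-!
On an edge, `‖M_{t,μ,ν}‖ ≤ η + P_{t,μ,ν} ≤ β P_{t,μ,ν}` with `β = 1 + η/α`, so each sum of
products of norms is at most `β ^ x` times the `P`-weight of the same paths. A node outside
`M_l^∞` reaches `M_u` backwards in at most `K - 1` steps, and a path cannot be continued past a
node of `M_u`, which has no in-edges; so every block of `K` steps loses `P`-weight at least
`α ^ (K - 1)`, and the weight is at most `(1 - α ^ (K - 1)) ^ ⌊x / K⌋`. Finally
`β ^ x (1 - α ^ (K - 1)) ^ ⌊x / K⌋ ≤ β ^ K (β ^ K - α ^ K) ^ ⌊x / K⌋`. Nodes of `M_l^∞` have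
all their in-neighbours in `M_l^∞`, so no admissible path ends there.
-/

open Matrix Finset Filter

noncomputable section

/-- The ℓ²-operator norm of a real matrix. -/
def opNorm {m n : ℕ} (A : Matrix (Fin m) (Fin n) ℝ) : ℝ :=
  ‖(Matrix.toEuclideanLin A).toContinuousLinearMap‖

/-- The ordered product of matrices along a path: for a path `v : Fin (x+1) → Fin K`
(representing `v_1, …, v_{x+1}`), `pathProd M t x v = M_{t,v_{x+1},v_x} ⋯ M_{t−x+1,v_2,v_1}`. -/
def pathProd {K d : ℕ} (M : ℕ → Fin K → Fin K → Matrix (Fin d) (Fin d) ℝ) :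
    (t : ℕ) → (x : ℕ) → (Fin (x + 1) → Fin K) → Matrix (Fin d) (Fin d) ℝ
  | _, 0, _ => 1
  | t, x + 1, v =>
      M t (v (Fin.last (x + 1))) (v (Fin.last x).castSucc) *
        pathProd M (t - 1) x (fun i => v i.castSucc)

end

open scoped Matrix.Norms.L2Operator

theorem Matrix.l2_opNorm_one_le {𝕜 n : Type*} [RCLike 𝕜] [Fintype n] [DecidableEq n] :
    ‖(1 : Matrix n n 𝕜)‖ ≤ 1 := by
  rw [← diagonal_one, l2_opNorm_diagonal]
  exact (pi_norm_le_iff_of_nonneg zero_le_one).2 fun _ => by simp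

theorem opNorm_eq_norm {m n : ℕ} (A : Matrix (Fin m) (Fin n) ℝ) : opNorm A = ‖A‖ := rfl

theorem opNorm_le_one_add_div_mul {d : ℕ} {A : Matrix (Fin d) (Fin d) ℝ} {α p η : ℝ}
    (hα : 0 < α) (hp : α ≤ p) (hη : 0 ≤ η) (h : opNorm (A - p • 1) ≤ η) :
    opNorm A ≤ (1 + η / α) * p := by
  have hp0 : 0 ≤ p := hα.le.trans hp
  rw [opNorm_eq_norm] at h ⊢
  calc ‖A‖ ≤ ‖A - p • 1‖ + ‖p • (1 : Matrix (Fin d) (Fin d) ℝ)‖ := norm_le_norm_sub_add _ _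
    _ ≤ η / α * α + p := by
      rw [div_mul_cancel₀ η hα.ne']
      grw [h, norm_smul, Real.norm_of_nonneg hp0, Matrix.l2_opNorm_one_le, mul_one]
    _ ≤ η / α * p + p := by gcongr
    _ = (1 + η / α) * p := by ring

theorem opNorm_pathProd_le {K d : ℕ} (M : ℕ → Fin K → Fin K → Matrix (Fin d) (Fin d) ℝ)
    (s x : ℕ) (v : Fin (x + 1) → Fin K) :
    opNorm (pathProd M (s + x) x v) ≤
      ∏ i : Fin x, opNorm (M (s + 1 + i) (v i.succ) (v i.castSucc)) := by
  induction x with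
  | zero => simpa [pathProd, opNorm_eq_norm] using Matrix.l2_opNorm_one_le
  | succ x ih =>
    rw [pathProd, Fin.prod_univ_castSucc, mul_comm, Nat.add_succ_sub_one]
    simp only [opNorm_eq_norm] at ih ⊢
    grw [norm_mul_le, ih]
    simp only [Fin.val_castSucc, Fin.succ_castSucc, Fin.val_last, Fin.succ_last]
    rw [add_right_comm s 1 x, add_assoc]

section Reachability

variable {K : ℕ} (E : Finset (Fin K × Fin K))

theorem mem_Nin {ν μ : Fin K} : ν ∈ Nin E μ ↔ (ν, μ) ∈ E := by simp [Nin]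

theorem mem_Mu {μ : Fin K} : μ ∈ Mu E ↔ Nin E μ = ∅ := by simp [Mu]

theorem mem_Ml_iff_notMem_Mu {μ : Fin K} : μ ∈ Ml E ↔ μ ∉ Mu E := by simp [Ml, Mu]

theorem mem_MlInf_of_edge {ν μ : Fin K} (hμ : μ ∈ MlInf E) (hν : (ν, μ) ∈ E) :
    ν ∈ MlInf E := by
  simp only [MlInf, mem_filter] at hμ ⊢
  have hνMu : ν ∉ Mu E := fun h => hμ.2 ν h (.single hν)
  exact ⟨(mem_Ml_iff_notMem_Mu E).2 hνMu, fun ω hω h => hμ.2 ω hω (h.tail hν)⟩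

theorem exists_transGen_of_notMem_MlInf {μ : Fin K} (hμMu : μ ∉ Mu E) (hμ : μ ∉ MlInf E) :
    ∃ ν ∈ Mu E, Relation.TransGen (EdgeRel E) ν μ := by
  simpa [MlInf, mem_Ml_iff_notMem_Mu, hμMu] using hμ

def reachWithin : ℕ → Finset (Fin K)
  | 0 => Mu E
  | j + 1 => reachWithin j ∪ univ.filter fun μ => ∃ ν ∈ reachWithin j, (ν, μ) ∈ E

theorem reachWithin_mono : Monotone (reachWithin E) :=
  monotone_nat_of_le_succ fun _ => subset_union_left

theorem mem_reachWithin_succ_of_mem {ν μ : Fin K} {j : ℕ} (hν : ν ∈ reachWithin E j)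
    (h : (ν, μ) ∈ E) : μ ∈ reachWithin E (j + 1) :=
  mem_union_right _ (mem_filter.2 ⟨mem_univ _, ν, hν, h⟩)

theorem exists_mem_reachWithin_of_transGen {ν μ : Fin K} (hν : ν ∈ Mu E)
    (h : Relation.TransGen (EdgeRel E) ν μ) : ∃ j, μ ∈ reachWithin E j := by
  induction h with
  | single h => exact ⟨1, mem_reachWithin_succ_of_mem E hν h⟩
  | tail _ h ih =>
    obtain ⟨j, hj⟩ := ih
    exact ⟨j + 1, mem_reachWithin_succ_of_mem E hj h⟩

/-- Once nonempty, the sets `reachWithin E j` grow strictly until they stabilise, so they are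
stable from `j = K - 1` on. -/
theorem reachWithin_subset_reachWithin_pred (hMu : (Mu E).Nonempty) (j : ℕ) :
    reachWithin E j ⊆ reachWithin E (K - 1) := by
  have hpos (m : ℕ) : 0 < #(reachWithin E m) :=
    (hMu.mono (reachWithin_mono E (Nat.zero_le m))).card_pos
  have heq {m n : ℕ} (hmn : m ≤ n) (h : #(reachWithin E n) ≤ #(reachWithin E m)) :
      reachWithin E m = reachWithin E n :=
    eq_of_subset_of_card_le (reachWithin_mono E hmn) h
  rcases le_total j (K - 1) with hj | hj
  · exact reachWithin_mono E hj
  refine (heq hj ?_).ge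
  have hcard := Nat.stabilises_of_monotone (f := fun m => #(reachWithin E m) - 1) (b := K - 1)
    (fun m n hmn => Nat.sub_le_sub_right (card_le_card (reachWithin_mono E hmn)) 1)
    (fun m => by simpa using Nat.sub_le_sub_right (card_le_univ (reachWithin E m)) 1) ?_ hj
  · have := hpos j; have := hpos (K - 1); omega
  intro m hm
  have h := heq (Nat.le_add_right m 1) (by have := hpos m; omega)
  have hstable : reachWithin E (m + 1 + 1) = reachWithin E (m + 1) := by
    conv_lhs => rw [reachWithin, ← h]
    rfl
  simp only [hstable]

theorem mem_reachWithin_pred_of_notMem_MlInf {μ : Fin K} (hμ : μ ∉ MlInf E) :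
    μ ∈ reachWithin E (K - 1) := by
  by_cases hμMu : μ ∈ Mu E
  · exact reachWithin_mono E (Nat.zero_le _) hμMu
  obtain ⟨ν, hν, h⟩ := exists_transGen_of_notMem_MlInf E hμMu hμ
  obtain ⟨j, hj⟩ := exists_mem_reachWithin_of_transGen E hν h
  exact reachWithin_subset_reachWithin_pred E ⟨ν, hν⟩ j hj

end Reachability

theorem sum_mul_ite_le {ι : Type*} [DecidableEq ι] {s : Finset ι} {w : ι → ℝ} {i : ι}
    (hi : i ∈ s) (hs : ∑ j ∈ s, w j ≤ 1) {α b c : ℝ} (hα : α ≤ w i) (hc : 0 ≤ c) (hb : 0 ≤ b) :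
    ∑ j ∈ s, w j * (if j = i then c * (1 - b) else c) ≤ c * (1 - α * b) :=
  calc ∑ j ∈ s, w j * (if j = i then c * (1 - b) else c)
      = (∑ j ∈ s, w j) * c - w i * (c * b) := by
        rw [← add_sum_erase _ _ hi, if_pos rfl, sum_mul, ← add_sum_erase _ _ hi,
          sum_congr rfl fun j hj => by rw [if_neg (ne_of_mem_erase hj)]]
        ring
    _ ≤ 1 * c - α * (c * b) := by gcongr
    _ = c * (1 - α * b) := by ring

section PathWeights

variable {K : ℕ} (E : Finset (Fin K × Fin K)) (A : Finset (Fin K))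

def avoidingPaths (x : ℕ) (μ : Fin K) : Finset (Fin (x + 1) → Fin K) :=
  (pathsTo E x μ).filter fun v => ∀ i : Fin x, v i.castSucc ∉ A

theorem mem_avoidingPaths {x : ℕ} {μ : Fin K} {v : Fin (x + 1) → Fin K} :
    v ∈ avoidingPaths E A x μ ↔
      v (Fin.last x) = μ ∧ (∀ i : Fin x, (v i.castSucc, v i.succ) ∈ E) ∧
        ∀ i : Fin x, v i.castSucc ∉ A := by
  simp [avoidingPaths, pathsTo, and_assoc]

theorem mem_avoidingPaths_succ {x : ℕ} {μ : Fin K} {v : Fin (x + 2) → Fin K} :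
    v ∈ avoidingPaths E A (x + 1) μ ↔
      v (Fin.last (x + 1)) = μ ∧ Fin.init v ∈ avoidingPaths E A x (Fin.init v (Fin.last x)) ∧
        (Fin.init v (Fin.last x), μ) ∈ E ∧ Fin.init v (Fin.last x) ∉ A := by
  simp only [mem_avoidingPaths, Fin.forall_fin_succ' (n := x), Fin.succ_last, Fin.succ_castSucc,
    Fin.init]
  constructor
  · rintro ⟨rfl, ⟨hE, hElast⟩, hA, hAlast⟩
    exact ⟨rfl, ⟨trivial, hE, hA⟩, hElast, hAlast⟩
  · rintro ⟨rfl, ⟨-, hE, hA⟩, hElast, hAlast⟩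
    exact ⟨rfl, ⟨hE, hElast⟩, hA, hAlast⟩

theorem avoidingPaths_succ_eq_empty (hA : ∀ ν μ, μ ∈ A → (ν, μ) ∈ E → ν ∈ A) {x : ℕ} {μ : Fin K}
    (hμ : μ ∈ A) : avoidingPaths E A (x + 1) μ = ∅ :=
  eq_empty_of_forall_notMem fun _ hv =>
    let ⟨_, _, hE, hnot⟩ := (mem_avoidingPaths_succ E A).1 hv
    hnot (hA _ _ hμ hE)

-- Indexed by the start time `s = t - x` rather than `t`, to avoid truncated subtraction.
def pathWeight (w : ℕ → Fin K → Fin K → ℝ) (s x : ℕ) (μ : Fin K) : ℝ :=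
  ∑ v ∈ avoidingPaths E A x μ, ∏ i : Fin x, w (s + 1 + i) (v i.succ) (v i.castSucc)

variable (w : ℕ → Fin K → Fin K → ℝ) (s : ℕ)

theorem pathWeight_zero (μ : Fin K) : pathWeight E A w s 0 μ = 1 := by
  have : avoidingPaths E A 0 μ = {fun _ => μ} := by
    ext v
    simp [avoidingPaths, pathsTo, funext_iff, Fin.forall_fin_one]
  simp [pathWeight, this]

theorem pathWeight_succ (x : ℕ) (μ : Fin K) :
    pathWeight E A w s (x + 1) μ =
      ∑ ν ∈ (Nin E μ).filter (· ∉ A), w (s + 1 + x) μ ν * pathWeight E A w s x ν := by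
  simp only [pathWeight, mul_sum]
  rw [sum_sigma']
  refine sum_bij' (fun v _ => ⟨Fin.init v (Fin.last x), Fin.init v⟩)
    (fun p _ => Fin.snoc p.2 μ) (fun v hv => ?_) (fun p hp => ?_) (fun v hv => ?_)
    (fun p hp => ?_) (fun v hv => ?_)
  · obtain ⟨-, hv, hE, hA⟩ := (mem_avoidingPaths_succ E A).1 hv
    exact mem_sigma.2 ⟨mem_filter.2 ⟨(mem_Nin E).2 hE, hA⟩, hv⟩
  · obtain ⟨hp1, hp2⟩ := mem_sigma.1 hp
    obtain ⟨hE, hA⟩ := mem_filter.1 hp1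
    have hlast : p.2 (Fin.last x) = p.1 := ((mem_avoidingPaths E A).1 hp2).1
    refine (mem_avoidingPaths_succ E A).2 ⟨Fin.snoc_last _ _, ?_⟩
    rw [Fin.init_snoc, hlast]
    exact ⟨hp2, (mem_Nin E).1 hE, hA⟩
  · obtain ⟨hlast, -⟩ := (mem_avoidingPaths_succ E A).1 hv
    simp only [← hlast]
    exact Fin.snoc_init_self v
  · have hlast : p.2 (Fin.last x) = p.1 := ((mem_avoidingPaths E A).1 (mem_sigma.1 hp).2).1
    simp [Fin.init_snoc, hlast]
  · obtain ⟨hlast, -⟩ := (mem_avoidingPaths_succ E A).1 hv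
    rw [Fin.prod_univ_castSucc, mul_comm]
    simp only [Fin.init, Fin.val_last, Fin.succ_last, hlast, Fin.succ_castSucc, Fin.val_castSucc]

variable {E A w}

theorem pathWeight_le_pow_mul_pathWeight {w' : ℕ → Fin K → Fin K → ℝ} {β : ℝ}
    (h0 : ∀ τ, 1 ≤ τ → ∀ ν μ, (ν, μ) ∈ E → 0 ≤ w' τ μ ν)
    (h : ∀ τ, 1 ≤ τ → ∀ ν μ, (ν, μ) ∈ E → w' τ μ ν ≤ β * w τ μ ν) (x : ℕ) (μ : Fin K) :
    pathWeight E A w' s x μ ≤ β ^ x * pathWeight E A w s x μ := by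
  rw [pathWeight, pathWeight, mul_sum]
  refine sum_le_sum fun v hv => ?_
  obtain ⟨-, hE, -⟩ := (mem_avoidingPaths E A).1 hv
  calc ∏ i : Fin x, w' (s + 1 + i) (v i.succ) (v i.castSucc)
      ≤ ∏ i : Fin x, β * w (s + 1 + i) (v i.succ) (v i.castSucc) :=
        prod_le_prod (fun i _ => h0 _ (by omega) _ _ (hE i)) fun i _ => h _ (by omega) _ _ (hE i)
    _ = β ^ x * ∏ i : Fin x, w (s + 1 + i) (v i.succ) (v i.castSucc) := by
        rw [prod_mul_distrib, prod_const, card_univ, Fintype.card_fin]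

variable (hw0 : ∀ τ, 1 ≤ τ → ∀ μ ν, 0 ≤ w τ μ ν)
include hw0

theorem pathWeight_succ_le {x : ℕ} {g : Fin K → ℝ} (hg0 : ∀ ν, 0 ≤ g ν)
    (hg : ∀ ν ∉ A, pathWeight E A w s x ν ≤ g ν) (μ : Fin K) :
    pathWeight E A w s (x + 1) μ ≤ ∑ ν ∈ Nin E μ, w (s + 1 + x) μ ν * g ν := by
  have hw := hw0 (s + 1 + x) (by omega) μ
  rw [pathWeight_succ]
  calc ∑ ν ∈ (Nin E μ).filter (· ∉ A), w (s + 1 + x) μ ν * pathWeight E A w s x ν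
      ≤ ∑ ν ∈ (Nin E μ).filter (· ∉ A), w (s + 1 + x) μ ν * g ν :=
        sum_le_sum fun ν hν => mul_le_mul_of_nonneg_left (hg ν (mem_filter.1 hν).2) (hw ν)
    _ ≤ ∑ ν ∈ Nin E μ, w (s + 1 + x) μ ν * g ν :=
        sum_le_sum_of_subset_of_nonneg (filter_subset _ _) fun ν _ _ =>
          mul_nonneg (hw ν) (hg0 ν)

variable (hw1 : ∀ τ, 1 ≤ τ → ∀ μ, ∑ ν ∈ Nin E μ, w τ μ ν ≤ 1)
include hw1

theorem pathWeight_add_le {x : ℕ} {c : ℝ} (hc : 0 ≤ c)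
    (h : ∀ ν ∉ A, pathWeight E A w s x ν ≤ c) (a : ℕ) {μ : Fin K} (hμ : μ ∉ A) :
    pathWeight E A w s (x + a) μ ≤ c := by
  induction a generalizing μ with
  | zero => exact h μ hμ
  | succ a ih =>
    rw [← add_assoc]
    calc pathWeight E A w s (x + a + 1) μ
        ≤ ∑ ν ∈ Nin E μ, w (s + 1 + (x + a)) μ ν * c :=
          pathWeight_succ_le s hw0 (fun _ => hc) (fun _ => ih) μ
      _ = (∑ ν ∈ Nin E μ, w (s + 1 + (x + a)) μ ν) * c := (sum_mul _ _ _).symm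
      _ ≤ c := mul_le_of_le_one_left hc (hw1 _ (by omega) μ)

/-- A node that reaches `Mu E` within `j` steps loses at least the weight `α ^ j` of the path
that leads backwards into `Mu E`, since such a path cannot be continued. -/
theorem pathWeight_add_le_mul_one_sub_pow {α : ℝ} (hα0 : 0 ≤ α) (hα1 : α ≤ 1)
    (hα : ∀ τ, 1 ≤ τ → ∀ ν μ, (ν, μ) ∈ E → α ≤ w τ μ ν) {x : ℕ} {c : ℝ} (hc : 0 ≤ c)
    (h : ∀ ν ∉ A, pathWeight E A w s x ν ≤ c) {j a : ℕ} (hja : j ≤ a) (hjx : j < x + a)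
    {μ : Fin K} (hμ : μ ∈ reachWithin E j) :
    pathWeight E A w s (x + a) μ ≤ c * (1 - α ^ j) := by
  induction j generalizing a μ with
  | zero =>
    obtain ⟨n, hn⟩ : ∃ n, x + a = n + 1 := ⟨x + a - 1, by omega⟩
    rw [hn, pathWeight_succ, (mem_Mu E).1 hμ]
    simp
  | succ j ih =>
    rcases mem_union.1 hμ with hμ | hμ
    · calc pathWeight E A w s (x + a) μ ≤ c * (1 - α ^ j) := ih (by omega) (by omega) hμ
        _ ≤ c * (1 - α ^ (j + 1)) := by
          gcongr c * (1 - ?_); exact pow_le_pow_of_le_one hα0 hα1 (Nat.le_succ j)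
    obtain ⟨ν, hν, hE⟩ := (mem_filter.1 hμ).2
    obtain ⟨a, rfl⟩ : ∃ a', a = a' + 1 := ⟨a - 1, by omega⟩
    set τ := s + 1 + (x + a)
    have hτ : 1 ≤ τ := by omega
    rw [← add_assoc, pow_succ']
    calc pathWeight E A w s (x + a + 1) μ
        ≤ ∑ ν' ∈ Nin E μ, w τ μ ν' * if ν' = ν then c * (1 - α ^ j) else c := by
          refine pathWeight_succ_le s hw0 (fun ν' => ?_) (fun ν' hν'A => ?_) μ
          · split_ifs
            · exact mul_nonneg hc (sub_nonneg.2 (pow_le_one₀ hα0 hα1))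
            · exact hc
          · split_ifs with hν'
            · exact hν' ▸ ih (by omega) (by omega) hν
            · exact pathWeight_add_le s hw0 hw1 hc h a hν'A
      _ ≤ c * (1 - α * α ^ j) :=
          sum_mul_ite_le ((mem_Nin E).2 hE) (hw1 τ hτ μ) (hα τ hτ ν μ hE) hc (pow_nonneg hα0 j)

theorem pathWeight_le_one_sub_pow_pow {α : ℝ} (hα0 : 0 ≤ α) (hα1 : α ≤ 1)
    (hα : ∀ τ, 1 ≤ τ → ∀ ν μ, (ν, μ) ∈ E → α ≤ w τ μ ν) (x : ℕ) {μ : Fin K}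
    (hμ : μ ∉ MlInf E) :
    pathWeight E (MlInf E) w s x μ ≤ (1 - α ^ (K - 1)) ^ (x / K) := by
  have hK : 0 < K := μ.pos
  induction x using Nat.strong_induction_on generalizing μ with
  | _ x ih =>
  rcases lt_or_ge x K with hx | hx
  · rw [Nat.div_eq_of_lt hx, pow_zero, ← zero_add x]
    exact pathWeight_add_le s hw0 hw1 zero_le_one (fun ν _ => (pathWeight_zero E _ w s ν).le) x hμ
  obtain ⟨y, rfl⟩ : ∃ y, x = y + K := ⟨x - K, by omega⟩
  rw [Nat.add_div_right y hK, pow_succ]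
  exact pathWeight_add_le_mul_one_sub_pow s hw0 hw1 hα0 hα1 hα
    (pow_nonneg (sub_nonneg.2 (pow_le_one₀ hα0 hα1)) _) (fun ν hν => ih y (by omega) hν)
    (by omega) (by omega) (mem_reachWithin_pred_of_notMem_MlInf E hμ)

end PathWeights

theorem pow_mul_one_sub_pow_le {α β : ℝ} {K : ℕ} (hK : 0 < K) (hα0 : 0 ≤ α) (hα1 : α ≤ 1)
    (hβ : 1 ≤ β) (x : ℕ) :
    β ^ x * (1 - α ^ (K - 1)) ^ (x / K) ≤ β ^ K * (β ^ K - α ^ K) ^ (x / K) := by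
  have hα' : 0 ≤ 1 - α ^ (K - 1) := sub_nonneg.2 (pow_le_one₀ hα0 hα1)
  have hβK : 1 ≤ β ^ K := one_le_pow₀ hβ
  have hstep : β ^ K * (1 - α ^ (K - 1)) ≤ β ^ K - α ^ K := by
    have hαK : α ^ K = α * α ^ (K - 1) := by rw [← pow_succ', Nat.sub_add_cancel hK]
    have := mul_le_mul_of_nonneg_right (hα1.trans hβK) (pow_nonneg hα0 (K - 1))
    rw [hαK]
    linarith
  have hx : x ≤ K + K * (x / K) := by
    have := Nat.lt_mul_div_succ x hK
    rw [mul_add, mul_one] at this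
    omega
  calc β ^ x * (1 - α ^ (K - 1)) ^ (x / K)
      ≤ β ^ (K + K * (x / K)) * (1 - α ^ (K - 1)) ^ (x / K) := by gcongr
    _ = β ^ K * (β ^ K * (1 - α ^ (K - 1))) ^ (x / K) := by rw [pow_add, pow_mul, mul_pow]; ring
    _ ≤ β ^ K * (β ^ K - α ^ K) ^ (x / K) := by gcongr

theorem stmt16_general
    {K : ℕ}
    (E : Finset (Fin K × Fin K))
    (α : ℝ) (hα0 : 0 < α) (hα1 : α < 1)
    (P : ℕ → Matrix (Fin K) (Fin K) ℝ)
    (hPnn : ∀ t, 1 ≤ t → ∀ μ ν : Fin K, 0 ≤ P t μ ν)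
    (hProw : ∀ t, 1 ≤ t → ∀ μ ∈ Ml E, ∑ ν ∈ Nin E μ, P t μ ν = 1)
    (hPα : ∀ t, 1 ≤ t → ∀ ν μ : Fin K, (ν, μ) ∈ E → α ≤ P t μ ν)
    {d : ℕ} (η : ℝ) (hη : 0 ≤ η)
    (M : ℕ → Fin K → Fin K → Matrix (Fin d) (Fin d) ℝ)
    (hM : ∀ t, 1 ≤ t → ∀ ν μ : Fin K, (ν, μ) ∈ E →
      opNorm (M t μ ν - P t μ ν • (1 : Matrix (Fin d) (Fin d) ℝ)) ≤ η) :
    (∀ μ ∈ Ml E, μ ∉ MlInf E → ∀ t x : ℕ, 1 ≤ x → x ≤ t →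
      (∑ v ∈ (pathsTo E x μ).filter (fun v => ∀ i : Fin x, v i.castSucc ∉ MlInf E),
          ∏ i : Fin x, opNorm (M (t - x + 1 + (i : ℕ)) (v i.succ) (v i.castSucc)) ≤
        (1 + η / α) ^ K * ((1 + η / α) ^ K - α ^ K) ^ (x / K)) ∧
      opNorm (∑ v ∈ (pathsTo E x μ).filter (fun v => ∀ i : Fin x, v i.castSucc ∉ MlInf E),
          pathProd M t x v) ≤
        (1 + η / α) ^ K * ((1 + η / α) ^ K - α ^ K) ^ (x / K)) ∧
    (∀ μ ∈ MlInf E, ∀ t x : ℕ, 1 ≤ x → x ≤ t →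
      ∑ v ∈ (pathsTo E x μ).filter (fun v => ∀ i : Fin x, v i.castSucc ∉ MlInf E),
        pathProd M t x v = 0) := by
  set β := 1 + η / α
  have hMβ (τ : ℕ) (hτ : 1 ≤ τ) (ν μ : Fin K) (hE : (ν, μ) ∈ E) :
      opNorm (M τ μ ν) ≤ β * P τ μ ν :=
    opNorm_le_one_add_div_mul hα0 (hPα τ hτ ν μ hE) hη (hM τ hτ ν μ hE)
  have hProw' (τ : ℕ) (hτ : 1 ≤ τ) (μ : Fin K) : ∑ ν ∈ Nin E μ, P τ μ ν ≤ 1 :=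
    if hμ : μ ∈ Ml E then (hProw τ hτ μ hμ).le
    else by simp [(mem_Mu E).1 ((mem_Ml_iff_notMem_Mu E).not_left.1 hμ)]
  have hnorms (μ : Fin K) (hμ : μ ∉ MlInf E) (s x : ℕ) :
      pathWeight E (MlInf E) (fun τ μ ν => opNorm (M τ μ ν)) s x μ ≤
        β ^ K * (β ^ K - α ^ K) ^ (x / K) :=
    calc _ ≤ β ^ x * pathWeight E (MlInf E) P s x μ :=
          pathWeight_le_pow_mul_pathWeight s (fun _ _ _ _ _ => norm_nonneg _) hMβ x μ
      _ ≤ β ^ x * (1 - α ^ (K - 1)) ^ (x / K) := by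
          gcongr
          exact pathWeight_le_one_sub_pow_pow s hPnn hProw' hα0.le hα1.le hPα x hμ
      _ ≤ _ := pow_mul_one_sub_pow_le μ.pos hα0.le hα1.le
          (le_add_of_nonneg_right (div_nonneg hη hα0.le)) x
  refine ⟨fun μ _ hμ t x _ hxt => ?_, fun μ hμ t x hx _ => ?_⟩
  · obtain ⟨s, rfl⟩ : ∃ s, t = s + x := ⟨t - x, by omega⟩
    refine ⟨by rw [Nat.add_sub_cancel]; exact hnorms μ hμ s x, ?_⟩
    calc opNorm (∑ v ∈ avoidingPaths E (MlInf E) x μ, pathProd M (s + x) x v)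
        ≤ ∑ v ∈ avoidingPaths E (MlInf E) x μ, opNorm (pathProd M (s + x) x v) := by
          simp only [opNorm_eq_norm]; exact norm_sum_le _ _
      _ ≤ _ := sum_le_sum fun v _ => opNorm_pathProd_le M s x v
      _ ≤ _ := hnorms μ hμ s x
  · obtain ⟨x, rfl⟩ : ∃ y, x = y + 1 := ⟨x - 1, by omega⟩
    change ∑ v ∈ avoidingPaths E (MlInf E) (x + 1) μ, _ = 0
    rw [avoidingPaths_succ_eq_empty E _ (fun _ _ => mem_MlInf_of_edge E) hμ, sum_empty]

/-- Let `M_{t,μ,ν}` be `d×d` matrices with `‖M_{t,μ,ν} − P_{t,μ,ν}·I_d‖_op ≤ η`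
for every edge `(ν,μ) ∈ E`. Then for every `μ ∈ M_l ∖ M_l^∞` and all `t ≥ x ≥ 1`, the sum over
`E`-paths `v_1 → ⋯ → v_x → μ` with `v_1,…,v_x ∉ M_l^∞` of the products of operator norms
`‖M_{t,μ,v_x}‖ ⋯ ‖M_{t−x+1,v_2,v_1}‖` is at most
`(1 + η/α)^K · ((1 + η/α)^K − α^K)^{⌊x/K⌋}`; in particular the operator norm of the sum of
the corresponding matrix products is at most this bound. Moreover, for `μ ∈ M_l^∞` the
corresponding matrix sum is the zero matrix. -/
theorem stmt16
    {K : ℕ} (hK : 1 ≤ K)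
    (E : Finset (Fin K × Fin K))
    (α : ℝ) (hα0 : 0 < α) (hα1 : α < 1)
    (P : ℕ → Matrix (Fin K) (Fin K) ℝ)
    (hPzero : ∀ t, 1 ≤ t → ∀ μ ν : Fin K,
      ¬ ((μ ∈ Ml E ∧ ν ∈ Nin E μ) ∨ (μ = ν ∧ μ ∈ Mu E)) → P t μ ν = 0)
    (hPnn : ∀ t, 1 ≤ t → ∀ μ ν : Fin K, 0 ≤ P t μ ν)
    (hPu : ∀ t, 1 ≤ t → ∀ μ ∈ Mu E, P t μ μ = 1)
    (hProw : ∀ t, 1 ≤ t → ∀ μ ∈ Ml E, ∑ ν ∈ Nin E μ, P t μ ν = 1)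
    (hPα : ∀ t, 1 ≤ t → ∀ ν μ : Fin K, (ν, μ) ∈ E → α ≤ P t μ ν)
    {d : ℕ} (hd : 1 ≤ d) (η : ℝ) (hη : 0 ≤ η)
    (M : ℕ → Fin K → Fin K → Matrix (Fin d) (Fin d) ℝ)
    (hM : ∀ t, 1 ≤ t → ∀ ν μ : Fin K, (ν, μ) ∈ E →
      opNorm (M t μ ν - P t μ ν • (1 : Matrix (Fin d) (Fin d) ℝ)) ≤ η) :
    (∀ μ ∈ Ml E, μ ∉ MlInf E → ∀ t x : ℕ, 1 ≤ x → x ≤ t →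
      (∑ v ∈ (pathsTo E x μ).filter (fun v => ∀ i : Fin x, v i.castSucc ∉ MlInf E),
          ∏ i : Fin x, opNorm (M (t - x + 1 + (i : ℕ)) (v i.succ) (v i.castSucc)) ≤
        (1 + η / α) ^ K * ((1 + η / α) ^ K - α ^ K) ^ (x / K)) ∧
      opNorm (∑ v ∈ (pathsTo E x μ).filter (fun v => ∀ i : Fin x, v i.castSucc ∉ MlInf E),
          pathProd M t x v) ≤
        (1 + η / α) ^ K * ((1 + η / α) ^ K - α ^ K) ^ (x / K)) ∧
    (∀ μ ∈ MlInf E, ∀ t x : ℕ, 1 ≤ x → x ≤ t →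
      ∑ v ∈ (pathsTo E x μ).filter (fun v => ∀ i : Fin x, v i.castSucc ∉ MlInf E),
        pathProd M t x v = 0) :=
  stmt16_general E α hα0 hα1 P hPnn hProw hPα η hη M hM
end
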